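/- arXiv:1906.03858 — 6 statements merged into one kernel-verified Lean document; each statement's English description precedes it below -/
import Mathlib

section
/- Let q > 0, w₁, w₂ > 0, and N₁, N₂ ≥ 1. Let L be the (N₁+N₂)×(N₁+N₂) graph Laplacian of the weighted complete graph with vertex set V₁ ⊔ V₂ (|Vᵢ| = Nᵢ), intra-community edge weight w₁ and inter-community edge weight w₂. Then det(qI + L) = q · (q + (N₁+N₂)w₂) · (q + N₁w₁ + N₂w₂)^{N₁-1} · (q + N₂w₁ + N₁w₂)^{N₂-1}. -/
/-!
Off the diagonal, `qI + L` depends only on the communities of the row and the column, so it is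
the diagonal matrix `D` with entries `a = q + N₁w₁ + N₂w₂` on `V₁` and `b = q + N₂w₁ + N₁w₂` on
`V₂`, plus the rank-two matrix `U K Uᵀ`, where `U` is the `V × {1, 2}` community indicator and
`K = -[[w₁, w₂], [w₂, w₁]]`. The matrix determinant lemma gives
`det (D + U K Uᵀ) = det D · det (1 + K Uᵀ D⁻¹ U)` with `Uᵀ D⁻¹ U = diag (N₁/a, N₂/b)`, and the
remaining `2 × 2` determinant is `q (q + (N₁ + N₂) w₂) / (a b)`.
-/

open Matrix

namespace Matrix

variable {ι κ R : Type*} [DecidableEq κ]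

theorem submatrix_eq_one_submatrix_mul_mul_one_submatrix [Fintype κ] [NonAssocSemiring R]
    (K : Matrix κ κ R) (c : ι → κ) :
    K.submatrix c c =
      (1 : Matrix κ κ R).submatrix c id * K * (1 : Matrix κ κ R).submatrix id c := by
  ext i j
  simp [mul_apply, one_apply]

variable [Fintype ι] [DecidableEq ι]

theorem one_submatrix_mul_diagonal_mul_one_submatrix [NonAssocSemiring R] (c : ι → κ)
    (d : ι → R) :
    (1 : Matrix κ κ R).submatrix id c * diagonal d * (1 : Matrix κ κ R).submatrix c id =
      diagonal fun k => ∑ i with c i = k, d i := by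
  ext k l
  simp only [mul_apply, submatrix_apply, id, one_apply, diagonal_apply, Finset.sum_filter,
    mul_ite, ite_mul, one_mul, mul_one, mul_zero, zero_mul, Finset.sum_ite_eq', Finset.mem_univ, if_true]
  split_ifs with hkl
  · subst hkl
    exact Finset.sum_congr rfl fun i _ => by grind
  · exact Finset.sum_eq_zero fun i _ => by grind

theorem det_diagonal_add_submatrix [Fintype κ] [Field R] (d : ι → R) (hd : ∀ i, d i ≠ 0)
    (K : Matrix κ κ R) (c : ι → κ) :
    (diagonal d + K.submatrix c c).det =
      (∏ i, d i) * (1 + K * diagonal fun k => ∑ i with c i = k, (d i)⁻¹).det := by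
  have hunit : IsUnit (diagonal d).det := by
    rw [det_diagonal]
    exact (Finset.prod_ne_zero_iff.mpr fun i _ => hd i).isUnit
  have hinv : (diagonal d)⁻¹ = diagonal fun i => (d i)⁻¹ :=
    inv_eq_left_inv (by simp [diagonal_mul_diagonal, hd])
  rw [submatrix_eq_one_submatrix_mul_mul_one_submatrix, Matrix.mul_assoc,
    det_add_mul _ _ hunit, det_diagonal, hinv, Matrix.mul_assoc, Matrix.mul_assoc,
    ← Matrix.mul_assoc _ (diagonal _), one_submatrix_mul_diagonal_mul_one_submatrix]

end Matrix

/-- Determinant of `qI + L` for the Laplacian of the two-community weighted complete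
graph with intra-weight `w₁` and inter-weight `w₂`. -/
theorem stmt6 (q w₁ w₂ : ℝ) (N₁ N₂ : ℕ) (hq : 0 < q) (hw₁ : 0 < w₁) (hw₂ : 0 < w₂)
    (hN₁ : 1 ≤ N₁) (hN₂ : 1 ≤ N₂)
    (L : Matrix (Fin N₁ ⊕ Fin N₂) (Fin N₁ ⊕ Fin N₂) ℝ)
    (hL : L = Matrix.of fun x y =>
      match x, y with
      | Sum.inl i, Sum.inl j => if i = j then ((N₁ : ℝ) - 1) * w₁ + (N₂ : ℝ) * w₂ else -w₁
      | Sum.inr i, Sum.inr j => if i = j then ((N₂ : ℝ) - 1) * w₁ + (N₁ : ℝ) * w₂ else -w₁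
      | Sum.inl _, Sum.inr _ => -w₂
      | Sum.inr _, Sum.inl _ => -w₂) :
    (q • (1 : Matrix (Fin N₁ ⊕ Fin N₂) (Fin N₁ ⊕ Fin N₂) ℝ) + L).det
      = q * (q + ((N₁ : ℝ) + (N₂ : ℝ)) * w₂) *
        (q + (N₁ : ℝ) * w₁ + (N₂ : ℝ) * w₂) ^ (N₁ - 1) *
        (q + (N₂ : ℝ) * w₁ + (N₁ : ℝ) * w₂) ^ (N₂ - 1) := by
  set a := q + (N₁ : ℝ) * w₁ + (N₂ : ℝ) * w₂
  set b := q + (N₂ : ℝ) * w₁ + (N₁ : ℝ) * w₂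
  have ha : a ≠ 0 := by positivity
  have hb : b ≠ 0 := by positivity
  let d : Fin N₁ ⊕ Fin N₂ → ℝ := Sum.elim (fun _ => a) (fun _ => b)
  let community : Fin N₁ ⊕ Fin N₂ → Fin 2 := Sum.elim (fun _ => 0) (fun _ => 1)
  have hM : q • 1 + L = diagonal d + !![-w₁, -w₂; -w₂, -w₁].submatrix community community := by
    ext (i | i) (j | j) <;>
      simp only [hL, Matrix.add_apply, Matrix.smul_apply, one_apply, diagonal_apply,
        submatrix_apply, of_apply, Sum.elim_inl, Sum.elim_inr, Sum.inl.injEq, Sum.inr.injEq,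
        reduceCtorEq, ↓reduceIte, cons_val', cons_val_zero, cons_val_one, cons_val_fin_one, d,
        community, smul_eq_mul] <;>
      (try split_ifs) <;> ring
  have hs : (fun k => ∑ i with community i = k, (d i)⁻¹) = ![N₁ / a, N₂ / b] := by
    ext k
    fin_cases k <;> simp [d, community, Finset.sum_filter, div_eq_mul_inv]
  have h2 : 1 + !![-w₁, -w₂; -w₂, -w₁] * diagonal ![N₁ / a, N₂ / b] =
      !![1 - w₁ * N₁ / a, -(w₂ * N₂ / b); -(w₂ * N₁ / a), 1 - w₁ * N₂ / b] := by
    ext i j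
    fin_cases i <;> fin_cases j <;> simp [vecMul_diagonal] <;> ring
  rw [hM, det_diagonal_add_submatrix d (by simp [d, ha, hb]) _ community, hs, h2,
    det_fin_two_of, Fintype.prod_sum_type]
  simp only [d, Sum.elim_inl, Sum.elim_inr, Finset.prod_const, Finset.card_univ, Fintype.card_fin]
  rw [← mul_pow_sub_one (by omega : N₁ ≠ 0), ← mul_pow_sub_one (by omega : N₂ ≠ 0)]
  field_simp
  ring
end

section
/- Let q > 0 and let G be a finite weighted graph with Laplacian L on N vertices. Then ∑_{F ∈ 𝓕} q^{|roots(F)|} · w(F) = det(qI + L), where the sum is over all spanning rooted forests F of G, |roots(F)| is the number of trees (roots) in F, and w(F) is the product of the edge weights of F. -/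
/-!
Row `x` of `q • 1 + L` is `q • e x + ∑ z, w x z • (e x - e z)`, so multilinearity of the
determinant in the rows expands `det (q • 1 + L)` over all maps `f : V → Option V` choosing a
parent for each vertex (`none` for a root). The term of `f` is `q ^ #roots * ∏ w x (f x)` times
the determinant of the matrix with rows `e x - e (f x)`. That determinant is `1` when `f` is a
rooted forest: in its permutation expansion a nonidentity permutation can only contribute if it
moves every vertex it moves to its parent, which closes a cycle of the parent map. Otherwise it
is `0`: the indicator of the vertices that never reach a root is a nonzero kernel vector.
-/

open scoped Classical

open Finset Matrix Function

theorem Matrix.det_of_sum_smul {n α R : Type*} [Fintype n] [DecidableEq n] [Fintype α]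
    [CommRing R] (c : n → α → R) (r : n → α → n → R) :
    (of fun i => ∑ a, c i a • r i a).det
      = ∑ g : n → α, (∏ i, c i (g i)) * (of fun i => r i (g i)).det := by
  change detRowAlternating (fun i => ∑ a, c i a • r i a)
    = ∑ g : n → α, (∏ i, c i (g i)) * detRowAlternating fun i => r i (g i)
  rw [← AlternatingMap.coe_multilinearMap, MultilinearMap.map_sum]
  simp only [AlternatingMap.coe_multilinearMap, AlternatingMap.map_smul_univ, smul_eq_mul]

theorem Equiv.Perm.exists_iterate_eq_self_of_eqOn_support {α : Type*} [Fintype α]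
    (σ : Equiv.Perm α) {h : α → α} (hh : ∀ y, σ y ≠ y → h y = σ y) {x : α} (hx : σ x ≠ x) :
    ∃ n ∈ Icc 1 (Fintype.card α), h^[n] x = x := by
  have hiter : ∀ k, h^[k] x = σ^[k] x := by
    intro k
    induction k with
    | zero => rfl
    | succ k ih =>
      rw [iterate_succ_apply', iterate_succ_apply', ih]
      apply hh
      rw [← iterate_succ_apply' σ, iterate_succ_apply]
      exact (σ.injective.iterate k).ne hx
  refine ⟨minimalPeriod σ x, mem_Icc.2 ⟨?_, minimalPeriod_le_card⟩, ?_⟩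
  · exact minimalPeriod_pos_of_mem_periodicPts (σ.injective.mem_periodicPts x)
  · rw [hiter]
    exact iterate_minimalPeriod

section RootedForest

variable {V : Type*} [Fintype V]

def IsRootedForest (f : V → Option V) : Prop :=
  ∀ x : V, ∀ n ∈ Icc 1 (Fintype.card V), (fun y => (f y).getD y)^[n] x = x → f x = none

theorem IsRootedForest.ne_some_self {f : V → Option V} (hf : IsRootedForest f) (x : V) :
    f x ≠ some x := by
  intro hx
  have hone : 1 ∈ Icc 1 (Fintype.card V) := mem_Icc.2 ⟨le_rfl, Fintype.card_pos_iff.2 ⟨x⟩⟩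
  simp [hf x 1 hone (by simp [hx])] at hx

theorem prod_elim_eq_pow_mul_prod {M : Type*} [CommMonoid M] (q : M) (w : V → V → M)
    (f : V → Option V) :
    ∏ x, (f x).elim q (w x) = q ^ #{x | f x = none} * ∏ x, (f x).elim 1 (w x) := by
  rw [← prod_const, prod_filter, ← prod_mul_distrib]
  refine prod_congr rfl fun x _ => ?_
  cases f x <;> simp

variable [DecidableEq V] {R : Type*} [CommRing R]

variable (R) in
def forestRow (x : V) (o : Option V) : V → R :=
  fun y => (if x = y then 1 else 0) - if o = some y then 1 else 0

variable (R) in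
def forestMatrix (f : V → Option V) : Matrix V V R :=
  of fun x => forestRow R x (f x)

theorem forestMatrix_mulVec_apply (f : V → Option V) (u : V → R) (x : V) :
    (forestMatrix R f *ᵥ u) x = u x - (f x).elim 0 u := by
  rcases hfx : f x with _ | z <;>
    simp [hfx, forestMatrix, forestRow, mulVec, dotProduct, sub_mul, sum_sub_distrib]

theorem det_forestMatrix_of_not_isRootedForest [IsDomain R] {f : V → Option V}
    (hf : ¬ IsRootedForest f) : (forestMatrix R f).det = 0 := by
  simp only [IsRootedForest, not_forall] at hf
  obtain ⟨x, n, hn, hper, hx⟩ := hf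
  set h : V → V := fun y => (f y).getD y
  set u : V → R := fun y => if ∀ k, f (h^[k] y) ≠ none then 1 else 0
  have hx_cyclic : ∀ k, f (h^[k] x) ≠ none := by
    intro k hk
    have hfix : IsFixedPt h (h^[k] x) := by simp [IsFixedPt, h, hk]
    have hk_le : k ≤ n * k := Nat.le_mul_of_pos_left k (mem_Icc.1 hn).1
    have hper' : h^[n * k] x = x := IsPeriodicPt.mul_const hper k
    rw [← Nat.sub_add_cancel hk_le, iterate_add_apply, hfix.iterate] at hper'
    exact hx (hper' ▸ hk)
  have hu_step : ∀ y z, f y = some z → u z = u y := by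
    intro y z hyz
    have hz : z = h y := by simp [h, hyz]
    have : (∀ k, f (h^[k] z) ≠ none) ↔ ∀ k, f (h^[k] y) ≠ none := by
      simp only [hz, ← iterate_succ_apply]
      exact ⟨fun H k => k.casesOn (by simp [hyz]) H, fun H k => H (k + 1)⟩
    simp only [u, this]
  refine exists_mulVec_eq_zero_iff.1 ⟨u, fun hu => ?_, funext fun y => ?_⟩
  · simpa [u, hx_cyclic] using congrFun hu x
  · rw [forestMatrix_mulVec_apply, Pi.zero_apply]
    rcases hy : f y with _ | z
    · simpa [u] using ⟨0, hy⟩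
    · simp [hu_step y z hy]

theorem det_forestMatrix_of_isRootedForest {f : V → Option V} (hf : IsRootedForest f) :
    (forestMatrix R f).det = 1 := by
  rw [← det_transpose, det_apply, sum_eq_single (1 : Equiv.Perm V)]
  · simp [forestMatrix, forestRow, hf.ne_some_self]
  · intro σ _ hσ
    obtain ⟨x, hx⟩ : ∃ x, σ x ≠ x := not_forall.1 fun h => hσ (Equiv.ext h)
    obtain ⟨y, hy, hfy⟩ : ∃ y, σ y ≠ y ∧ f y ≠ some (σ y) := by
      by_contra! hall
      obtain ⟨n, hn, hcyc⟩ := σ.exists_iterate_eq_self_of_eqOn_support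
        (h := fun y => (f y).getD y) (fun y hy => by simp [hall y hy]) hx
      simpa [hf x n hn hcyc] using hall x hx
    refine smul_eq_zero_of_right _ (prod_eq_zero (mem_univ y) ?_)
    simp [forestMatrix, forestRow, Ne.symm hy, hfy]
  · simp

theorem det_forestMatrix [IsDomain R] (f : V → Option V) :
    (forestMatrix R f).det = if IsRootedForest f then 1 else 0 := by
  split_ifs with hf
  · exact det_forestMatrix_of_isRootedForest hf
  · exact det_forestMatrix_of_not_isRootedForest hf

def laplacian (w : V → V → R) : Matrix V V R :=
  of fun x y => if x = y then ∑ z ∈ univ.erase x, w x z else -w x y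

theorem smul_one_add_laplacian_eq_sum_forestRow (q : R) (w : V → V → R) :
    q • 1 + laplacian w = of fun x => ∑ o : Option V, o.elim q (w x) • forestRow R x o := by
  ext x y
  rw [of_apply, Finset.sum_apply, Fintype.sum_option]
  by_cases hxy : x = y
  · subst hxy
    simp [laplacian, forestRow, mul_sub, sum_sub_distrib]
  · simp [laplacian, forestRow, hxy]

theorem det_smul_one_add_laplacian [IsDomain R] (q : R) (w : V → V → R) :
    (q • 1 + laplacian w).det = ∑ f : V → Option V,
      if IsRootedForest f then ∏ x, (f x).elim q (w x) else 0 := by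
  rw [smul_one_add_laplacian_eq_sum_forestRow, det_of_sum_smul]
  change ∑ f, _ * (forestMatrix R f).det = _
  simp only [det_forestMatrix, mul_ite, mul_one, mul_zero]

end RootedForest

theorem stmt7_general {V : Type*} [Fintype V] [DecidableEq V] (w : V → V → ℝ) (q : ℝ) :
    ∑ f ∈ Finset.univ.filter (fun f : V → Option V =>
        ∀ x : V, ∀ n ∈ Finset.Icc 1 (Fintype.card V),
          (fun y => ((f y).getD y))^[n] x = x → f x = none),
      q ^ (Finset.univ.filter fun x => f x = none).card * ∏ x : V, (f x).elim 1 (w x)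
    = (q • (1 : Matrix V V ℝ) +
        Matrix.of fun x y =>
          if x = y then ∑ z ∈ Finset.univ.erase x, w x z else -w x y).det := by
  refine Eq.trans ?_ (det_smul_one_add_laplacian q w).symm
  rw [sum_filter]
  refine sum_congr rfl fun f _ => ?_
  rw [prod_elim_eq_pow_mul_prod q]
  congr

/-- The rooted matrix-forest theorem: the generating polynomial of spanning rooted
forests, weighted by `q^(#roots) · w(F)`, equals `det(qI + L)`.
A rooted forest is encoded by a parent map `f : V → Option V` (roots point to `none`)
whose parent dynamics has no nontrivial cycles. -/
theorem stmt7 {V : Type*} [Fintype V] [DecidableEq V] (w : V → V → ℝ)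
    (hsymm : ∀ x y, w x y = w y x) (q : ℝ) (hq : 0 < q) :
    ∑ f ∈ Finset.univ.filter (fun f : V → Option V =>
        ∀ x : V, ∀ n ∈ Finset.Icc 1 (Fintype.card V),
          (fun y => ((f y).getD y))^[n] x = x → f x = none),
      q ^ (Finset.univ.filter fun x => f x = none).card * ∏ x : V, (f x).elim 1 (w x)
    = (q • (1 : Matrix V V ℝ) +
        Matrix.of fun x y =>
          if x = y then ∑ z ∈ Finset.univ.erase x, w x z else -w x y).det :=
  stmt7_general w q
end

section
/- Consider a discrete-time Markov chain (Z(n))_{n≥0} on states {1,...,N} ('bear on a stair') defined as follows: Z(0) = 1, and given Z(n) = z, at each step a uniform random index J ∈ {1,...,N} is chosen; if J ≤ z then Z(n+1) = J, and if J > z then Z(n+1) = z + 1. Then for all h ≥ 1: P(Z(n) = h) = ∏_{i=1}^{h-1}(1 - i/N) · (h/N) if n ≥ h; P(Z(n) = h) = ∏_{i=1}^{h-1}(1 - i/N) if n = h - 1; and P(Z(n) = h) = 0 if n < h - 1. -/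
private lemma prodP (N k : ℕ) (hk : 1 ≤ k) :
    (∏ i ∈ Finset.Icc 1 k, (1 - (i : ℝ) / (N : ℝ))) =
      (∏ i ∈ Finset.Icc 1 (k - 1), (1 - (i : ℝ) / (N : ℝ))) * (1 - (k : ℝ) / (N : ℝ)) := by
  obtain ⟨m, rfl⟩ : ∃ m, k = m + 1 := ⟨k - 1, (Nat.succ_pred_eq_of_pos hk).symm⟩
  rw [Finset.prod_Icc_succ_top (by omega)]
  simp

/-- The 'bear on a stair' chain on `{1,…,N}`: `p n h` is the probability of being at
height `h` at time `n`; it satisfies an explicit product formula. -/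
theorem stmt8 (N : ℕ) (hN : 1 ≤ N) (p : ℕ → ℕ → ℝ)
    (h0 : ∀ h, p 0 h = if h = 1 then 1 else 0)
    (hrec : ∀ n : ℕ, ∀ h ∈ Finset.Icc 1 N,
      p (n + 1) h = (1 / (N : ℝ)) * ∑ z ∈ Finset.Icc h N, p n z +
        (if 2 ≤ h then (((N : ℝ) - ((h : ℝ) - 1)) / (N : ℝ)) * p n (h - 1) else 0))
    (n h : ℕ) (hh1 : 1 ≤ h) (hhN : h ≤ N) :
    (h ≤ n → p n h = (∏ i ∈ Finset.Icc 1 (h - 1), (1 - (i : ℝ) / (N : ℝ))) * ((h : ℝ) / (N : ℝ))) ∧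
    (n = h - 1 → p n h = ∏ i ∈ Finset.Icc 1 (h - 1), (1 - (i : ℝ) / (N : ℝ))) ∧
    (n < h - 1 → p n h = 0) := by
  have hN0 : (N : ℝ) ≠ 0 := by positivity
  induction n generalizing h with
  | zero =>
    refine ⟨fun hle => by omega, fun he => ?_, fun hlt => ?_⟩
    · have : h = 1 := by omega
      subst this; simp [h0]
    · have : h ≠ 1 := by omega
      simp [h0, this]
  | succ n IH =>
    have pz : ∀ z, n + 1 < z → z ≤ N → p n z = 0 := fun z hz hzN =>
      (IH z (by omega) hzN).2.2 (by omega)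
    have sumP : ∀ d h', 1 ≤ h' → h' ≤ N → h' ≤ n + 1 → N - h' ≤ d →
        ∑ z ∈ Finset.Icc h' N, p n z = ∏ i ∈ Finset.Icc 1 (h' - 1), (1 - (i : ℝ) / (N : ℝ)) := by
      intro d
      induction d with
      | zero =>
        intro h' h1' hN' hn' hd
        have hEq : h' = N := by omega
        subst hEq
        rw [Finset.Icc_self, Finset.sum_singleton]
        rcases Nat.lt_or_ge n h' with hlt | hge
        · exact (IH h' h1' le_rfl).2.1 (by omega)
        · rw [(IH h' h1' le_rfl).1 hge, div_self hN0, mul_one]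
      | succ d IHd =>
        intro h' h1' hN' hn' hd
        rcases le_or_gt (N - h') d with hle | hlt
        · exact IHd h' h1' hN' hn' hle
        have hlt' : h' < N := by omega
        rw [← Finset.Ioc_insert_left hN', Finset.sum_insert (by simp),
            ← Finset.Icc_add_one_left_eq_Ioc]
        rcases le_or_gt (h' + 1) (n + 1) with hc | hc
        · rw [IHd (h' + 1) (by omega) (by omega) hc (by omega),
            (IH h' h1' (by omega)).1 (by omega)]
          have := prodP N h' h1'
          simp only [Nat.add_sub_cancel] at *
          rw [this]; ring
        · have hh' : h' = n + 1 := by omega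
          rw [(IH h' h1' (by omega)).2.1 (by omega)]
          have : ∑ z ∈ Finset.Icc (h' + 1) N, p n z = 0 :=
            Finset.sum_eq_zero fun z hz => by
              rw [Finset.mem_Icc] at hz; exact pz z (by omega) hz.2
          rw [this, add_zero]
    rw [hrec n h (Finset.mem_Icc.mpr ⟨hh1, hhN⟩)]
    have hcast : ((h - 1 : ℕ) : ℝ) = (h : ℝ) - 1 := by
      push_cast [hh1]; ring
    refine ⟨fun hle => ?_, fun he => ?_, fun hlt => ?_⟩
    · rw [sumP N h hh1 hhN hle (by omega)]
      by_cases h2 : 2 ≤ h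
      · rw [if_pos h2, (IH (h - 1) (by omega) (by omega)).1 (by omega)]
        have hp := prodP N (h - 1) (by omega)
        have h11 : (1 : ℕ) ≤ h - 1 := by omega
        rw [hcast] at hp
        rw [hp, hcast]
        field_simp
        ring
      · have : h = 1 := by omega
        subst this
        simp
    · have h2 : 2 ≤ h := by omega
      have hs : ∑ z ∈ Finset.Icc h N, p n z = 0 :=
        Finset.sum_eq_zero fun z hz => by
          rw [Finset.mem_Icc] at hz; exact pz z (by omega) hz.2
      rw [hs, if_pos h2, (IH (h - 1) (by omega) (by omega)).2.1 (by omega)]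
      have hp := prodP N (h - 1) (by omega)
      rw [hcast] at hp
      rw [hp]
      field_simp
      ring
    · have h2 : 2 ≤ h := by omega
      have hs : ∑ z ∈ Finset.Icc h N, p n z = 0 :=
        Finset.sum_eq_zero fun z hz => by
          rw [Finset.mem_Icc] at hz; exact pz z (by omega) hz.2
      rw [hs, if_pos h2, (IH (h - 1) (by omega) (by omega)).2.2 (by omega)]
      ring
end

section
/- For the bear process (Z(n))_{n≥0} of the previous context, the cumulative distribution satisfies: P(Z(n) ≥ h) = ∏_{i=1}^{h-1}(1 - i/N) if n ≥ h - 1, and P(Z(n) ≥ h) = 0 if n < h - 1. -/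
/-!
The bear is at height `≥ k + 1` after a step iff it was at height `≥ k` and drew `J > k`, so the
tail sums `T n h = ∑_{z ≥ h} p n z` satisfy `T (n + 1) (k + 1) = (1 - k / N) * T n k`; from the
recurrence for `p` this follows by downward induction on `k`. Iterating it from `T n 1 = 1`
gives the product, while `T 0 (k + 1) = 0` for `k ≥ 1`.
-/

open Finset

lemma Finset.sum_Icc_eq_add_sum_Icc_add_one {M : Type*} [AddCommMonoid M] {a b : ℕ} (hab : a ≤ b)
    (f : ℕ → M) : ∑ i ∈ Icc a b, f i = f a + ∑ i ∈ Icc (a + 1) b, f i := by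
  rw [← insert_Icc_add_one_left_eq_Icc hab, sum_insert (by simp)]

/-- One step of the chain: from height `h - 1` the bear climbs to `h` unless `J ≤ h - 1`, and it
lands on `h` from any height `≥ h` when `J = h`. -/
def IsBearRecurrence (N : ℕ) (p : ℕ → ℕ → ℝ) : Prop :=
  ∀ n : ℕ, ∀ h ∈ Finset.Icc 1 N,
    p (n + 1) h = (1 / (N : ℝ)) * ∑ z ∈ Finset.Icc h N, p n z +
      (if 2 ≤ h then (((N : ℝ) - ((h : ℝ) - 1)) / (N : ℝ)) * p n (h - 1) else 0)

namespace IsBearRecurrence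

variable {N : ℕ} {p : ℕ → ℕ → ℝ}

lemma apply_succ_add_one (hp : IsBearRecurrence N p) (n : ℕ) {k : ℕ} (hk : 1 ≤ k) (hkN : k < N) :
    p (n + 1) (k + 1) = (∑ z ∈ Icc (k + 1) N, p n z + (N - k) * p n k) / N := by
  rw [hp n (k + 1) (mem_Icc.2 ⟨by omega, hkN⟩), if_pos (by omega)]
  push_cast
  ring

lemma mul_sum_Icc_add_one_succ (hp : IsBearRecurrence N p) (n : ℕ) {k : ℕ} (hk : 1 ≤ k)
    (hkN : k ≤ N) :
    N * ∑ z ∈ Icc (k + 1) N, p (n + 1) z = (N - k) * ∑ z ∈ Icc k N, p n z := by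
  induction hkN using Nat.decreasingInduction with
  | self => simp
  | of_succ k hkN ih =>
    have hN : (N : ℝ) ≠ 0 := by norm_cast; omega
    rw [sum_Icc_eq_add_sum_Icc_add_one hkN, mul_add, ih (by omega), hp.apply_succ_add_one n hk hkN,
      sum_Icc_eq_add_sum_Icc_add_one hkN.le]
    field_simp
    push_cast
    ring

lemma sum_Icc_one_succ (hp : IsBearRecurrence N p) (n : ℕ) (hN : 1 ≤ N) :
    ∑ z ∈ Icc 1 N, p (n + 1) z = ∑ z ∈ Icc 1 N, p n z := by
  have hN' : (N : ℝ) ≠ 0 := by norm_cast; omega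
  have htail := hp.mul_sum_Icc_add_one_succ n le_rfl hN
  rw [sum_Icc_eq_add_sum_Icc_add_one hN, hp n 1 (mem_Icc.2 ⟨le_rfl, hN⟩), if_neg (by omega)]
  field_simp
  linear_combination htail

lemma sum_Icc_add_one_eq (hp : IsBearRecurrence N p) (h0 : ∀ h, p 0 h = if h = 1 then 1 else 0)
    (n : ℕ) {k : ℕ} (hkN : k < N) :
    ∑ z ∈ Icc (k + 1) N, p n z = if k ≤ n then ∏ i ∈ Icc 1 k, (1 - (i : ℝ) / N) else 0 := by
  induction n generalizing k with
  | zero =>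
    simp_rw [h0, sum_ite_eq', mem_Icc]
    rcases k with _ | k
    · simp [Nat.one_le_iff_ne_zero.2 (by omega : N ≠ 0)]
    · simp
  | succ n ih =>
    rcases k with _ | k
    · simpa using (hp.sum_Icc_one_succ n (by omega)).trans (ih hkN)
    · have hN : (N : ℝ) ≠ 0 := by norm_cast; omega
      have htail := hp.mul_sum_Icc_add_one_succ n (k := k + 1) (by omega) hkN.le
      rw [ih (by omega)] at htail
      rw [← mul_right_inj' hN, htail, prod_Icc_succ_top (by omega)]
      simp only [add_le_add_iff_right]
      split_ifs
      · field_simp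
      · simp

end IsBearRecurrence

theorem stmt9_general (N : ℕ) (p : ℕ → ℕ → ℝ)
    (h0 : ∀ h, p 0 h = if h = 1 then 1 else 0)
    (hrec : ∀ n : ℕ, ∀ h ∈ Finset.Icc 1 N,
      p (n + 1) h = (1 / (N : ℝ)) * ∑ z ∈ Finset.Icc h N, p n z +
        (if 2 ≤ h then (((N : ℝ) - ((h : ℝ) - 1)) / (N : ℝ)) * p n (h - 1) else 0))
    (n h : ℕ) (hh1 : 1 ≤ h) (hhN : h ≤ N) :
    (h - 1 ≤ n → ∑ z ∈ Finset.Icc h N, p n z = ∏ i ∈ Finset.Icc 1 (h - 1), (1 - (i : ℝ) / (N : ℝ))) ∧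
    (n < h - 1 → ∑ z ∈ Finset.Icc h N, p n z = 0) := by
  obtain ⟨k, rfl⟩ : ∃ k, h = k + 1 := ⟨h - 1, by omega⟩
  rw [Nat.add_sub_cancel, IsBearRecurrence.sum_Icc_add_one_eq hrec h0 n (by omega)]
  exact ⟨fun hkn => if_pos hkn, fun hnk => if_neg hnk.not_ge⟩

/-- Cumulative distribution of the 'bear on a stair' chain:
`P(Z(n) ≥ h) = ∏_{i=1}^{h-1} (1 - i/N)` for `n ≥ h - 1`, and `0` otherwise. -/
theorem stmt9 (N : ℕ) (hN : 1 ≤ N) (p : ℕ → ℕ → ℝ)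
    (h0 : ∀ h, p 0 h = if h = 1 then 1 else 0)
    (hrec : ∀ n : ℕ, ∀ h ∈ Finset.Icc 1 N,
      p (n + 1) h = (1 / (N : ℝ)) * ∑ z ∈ Finset.Icc h N, p n z +
        (if 2 ≤ h then (((N : ℝ) - ((h : ℝ) - 1)) / (N : ℝ)) * p n (h - 1) else 0))
    (n h : ℕ) (hh1 : 1 ≤ h) (hhN : h ≤ N) :
    (h - 1 ≤ n → ∑ z ∈ Finset.Icc h N, p n z = ∏ i ∈ Finset.Icc 1 (h - 1), (1 - (i : ℝ) / (N : ℝ))) ∧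
    (n < h - 1 → ∑ z ∈ Finset.Icc h N, p n z = 0) :=
  stmt9_general N p h0 hrec n h hh1 hhN
end

section
/- Let (Z(n)) be the bear process on {1,...,N} (uniform step selection, move down to selected step if lower or equal, up by one if higher), and let T be an independent geometric time: at each step, independently with probability p ∈ (0,1) the process is stopped before moving. Let Z(T⁻) denote the position at the step immediately before stopping. Then P(Z(T⁻) ≥ h) = (1-p)^{h-1} · ∏_{i=1}^{h-1}(1 - i/N) for all 1 ≤ h ≤ N. -/
/-!
By induction on `n`, `P(Z(n) ≥ h) = tailProb N n h`: it is `∏_{i<h} (1 - i/N)` when `h ≤ n + 1`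
and `0` otherwise. Indeed, differences of consecutive tails satisfy the same one-step recursion as
the point masses `p n h`, and the tails vanish at `h = N + 1` because of the factor `1 - N/N`.
Averaging the indicator of `h - 1 ≤ n` against the geometric law of `T - 1` gives `(1-p)^{h-1}`.
-/

open Finset

theorem hasSum_geometric_mul_ite {r : ℝ} (hr : |r| < 1) (k : ℕ) (c : ℝ) :
    HasSum (fun m : ℕ => (1 - r) * r ^ m * if k ≤ m then c else 0) (r ^ k * c) := by
  have hr1 : 1 - r ≠ 0 := by linarith [le_abs_self r]
  rw [← hasSum_nat_add_iff' k]
  have hhead : ∑ m ∈ range k, ((1 - r) * r ^ m * if k ≤ m then c else 0) = 0 :=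
    sum_eq_zero fun m hm => by simp [(mem_range.mp hm).not_ge]
  have hshift : ∀ m, (1 - r) * r ^ (m + k) * (if k ≤ m + k then c else 0)
      = (1 - r) * r ^ k * c * r ^ m := fun m => by
    rw [if_pos (Nat.le_add_left k m), pow_add]; ring
  simp only [hhead, sub_zero, hshift]
  have hgeom := (hasSum_geometric_of_abs_lt_one hr).mul_left ((1 - r) * r ^ k * c)
  rwa [show (1 - r) * r ^ k * c * (1 - r)⁻¹ = r ^ k * c by field_simp] at hgeom

noncomputable def climbProb (N h : ℕ) : ℝ := ∏ i ∈ Icc 1 (h - 1), (1 - (i : ℝ) / N)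

noncomputable def tailProb (N n h : ℕ) : ℝ := if h ≤ n + 1 then climbProb N h else 0

@[simp] lemma climbProb_one (N : ℕ) : climbProb N 1 = 1 := by simp [climbProb]

lemma climbProb_succ (N : ℕ) {h : ℕ} (hh : 1 ≤ h) :
    climbProb N (h + 1) = climbProb N h * (1 - (h : ℝ) / N) := by
  obtain ⟨k, rfl⟩ := Nat.exists_eq_add_of_le' hh
  simp only [climbProb, Nat.add_sub_cancel]
  exact prod_Icc_succ_top (by omega) _

lemma climbProb_succ_self {N : ℕ} (hN : N ≠ 0) : climbProb N (N + 1) = 0 :=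
  prod_eq_zero (i := N) (by simp; omega) (by simp [hN])

lemma tailProb_succ_self {N : ℕ} (hN : N ≠ 0) (n : ℕ) : tailProb N n (N + 1) = 0 := by
  simp [tailProb, climbProb_succ_self hN]

lemma sum_Icc_eq_tailProb {N n a : ℕ} (ha : 1 ≤ a) (haN : a ≤ N) (q : ℕ → ℝ)
    (hq : ∀ z ∈ Icc a N, q z = tailProb N n z - tailProb N n (z + 1)) :
    ∑ z ∈ Icc a N, q z = tailProb N n a := by
  have hN : N ≠ 0 := by omega
  have := sum_Icc_sub haN (fun z => tailProb N n z)
  rw [sum_congr rfl hq, ← neg_inj, ← sum_neg_distrib]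
  simp only [neg_sub, this, tailProb_succ_self hN, zero_sub]

lemma tailProb_succ_sub_one {N : ℕ} (n : ℕ) :
    tailProb N (n + 1) 1 - tailProb N (n + 1) 2 = 1 / N * tailProb N n 1 := by
  simp [tailProb, climbProb_succ N le_rfl]

lemma tailProb_succ_sub_of_one_le {N : ℕ} (hN : N ≠ 0) (n : ℕ) {y : ℕ} (hy : 1 ≤ y) :
    tailProb N (n + 1) (y + 1) - tailProb N (n + 1) (y + 2) =
      1 / N * tailProb N n (y + 1) + (N - y) / N * (tailProb N n y - tailProb N n (y + 1)) := by
  have hN' : (N : ℝ) ≠ 0 := Nat.cast_ne_zero.mpr hN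
  simp only [tailProb, climbProb_succ N (Nat.le_succ_of_le hy), climbProb_succ N hy]
  split_ifs <;> first | omega | (push_cast; field_simp; ring)

theorem eq_tailProb_sub_tailProb {N : ℕ} {p : ℕ → ℕ → ℝ} (h0 : ∀ h, p 0 h = if h = 1 then 1 else 0)
    (hrec : ∀ n : ℕ, ∀ h ∈ Finset.Icc 1 N,
      p (n + 1) h = (1 / (N : ℝ)) * ∑ z ∈ Finset.Icc h N, p n z +
        (if 2 ≤ h then (((N : ℝ) - ((h : ℝ) - 1)) / (N : ℝ)) * p n (h - 1) else 0))
    (n : ℕ) : ∀ z ∈ Icc 1 N, p n z = tailProb N n z - tailProb N n (z + 1) := by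
  induction n with
  | zero =>
    intro z hz
    have hz1 := (mem_Icc.mp hz).1
    rw [h0]
    split_ifs with hz_eq
    · simp [hz_eq, tailProb]
    · simp [tailProb, show ¬z ≤ 1 by omega, show ¬z + 1 ≤ 1 by omega]
  | succ n ih =>
    intro z hz
    obtain ⟨hz1, hzN⟩ := mem_Icc.mp hz
    have hN : N ≠ 0 := by omega
    have htail : ∑ w ∈ Icc z N, p n w = tailProb N n z :=
      sum_Icc_eq_tailProb hz1 hzN _ fun w hw => ih w (Icc_subset_Icc_left hz1 hw)
    rw [hrec n z hz, htail]
    obtain rfl | ⟨y, hy, rfl⟩ : z = 1 ∨ ∃ y, 1 ≤ y ∧ z = y + 1 := by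
      rcases z with _ | _ | y <;> simp_all
    · simp [tailProb_succ_sub_one]
    · rw [if_pos (by omega), Nat.add_sub_cancel, ih y (by simp; omega),
        tailProb_succ_sub_of_one_le hN n hy]
      push_cast
      ring

theorem stmt10_general (N : ℕ) (pk : ℝ) (hpk0 : 0 < pk) (hpk1 : pk < 1)
    (p : ℕ → ℕ → ℝ)
    (h0 : ∀ h, p 0 h = if h = 1 then 1 else 0)
    (hrec : ∀ n : ℕ, ∀ h ∈ Finset.Icc 1 N,
      p (n + 1) h = (1 / (N : ℝ)) * ∑ z ∈ Finset.Icc h N, p n z +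
        (if 2 ≤ h then (((N : ℝ) - ((h : ℝ) - 1)) / (N : ℝ)) * p n (h - 1) else 0))
    (h : ℕ) (hh1 : 1 ≤ h) (hhN : h ≤ N) :
    ∑' m : ℕ, pk * (1 - pk) ^ m * ∑ z ∈ Finset.Icc h N, p m z
      = (1 - pk) ^ (h - 1) * ∏ i ∈ Finset.Icc 1 (h - 1), (1 - (i : ℝ) / (N : ℝ)) := by
  have htail (m : ℕ) : ∑ z ∈ Icc h N, p m z = if h - 1 ≤ m then climbProb N h else 0 := by
    rw [sum_Icc_eq_tailProb hh1 hhN _ fun z hz =>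
      eq_tailProb_sub_tailProb h0 hrec m z (Icc_subset_Icc_left hh1 hz)]
    simp only [tailProb, Nat.sub_le_iff_le_add]
  have hr : |1 - pk| < 1 := abs_lt.mpr ⟨by linarith, by linarith⟩
  change _ = (1 - pk) ^ (h - 1) * climbProb N h
  simp_rw [htail]
  convert (hasSum_geometric_mul_ite hr (h - 1) (climbProb N h)).tsum_eq using 4
  ring

/-- The bear process stopped at an independent geometric time of parameter `pk`:
the position just before stopping satisfies
`P(Z(T⁻) ≥ h) = (1-pk)^{h-1} ∏_{i=1}^{h-1}(1 - i/N)`. -/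
theorem stmt10 (N : ℕ) (hN : 1 ≤ N) (pk : ℝ) (hpk0 : 0 < pk) (hpk1 : pk < 1)
    (p : ℕ → ℕ → ℝ)
    (h0 : ∀ h, p 0 h = if h = 1 then 1 else 0)
    (hrec : ∀ n : ℕ, ∀ h ∈ Finset.Icc 1 N,
      p (n + 1) h = (1 / (N : ℝ)) * ∑ z ∈ Finset.Icc h N, p n z +
        (if 2 ≤ h then (((N : ℝ) - ((h : ℝ) - 1)) / (N : ℝ)) * p n (h - 1) else 0))
    (h : ℕ) (hh1 : 1 ≤ h) (hhN : h ≤ N) :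
    ∑' m : ℕ, pk * (1 - pk) ^ m * ∑ z ∈ Finset.Icc h N, p m z
      = (1 - pk) ^ (h - 1) * ∏ i ∈ Finset.Icc 1 (h - 1), (1 - (i : ℝ) / (N : ℝ)) :=
  stmt10_general N pk hpk0 hpk1 p h0 hrec h hh1 hhN
end

section
/- Let q > 0, w > 0, N ≥ 2 and let p = q/(q + Nw). Suppose a random variable |Γ| on {1,...,N} satisfies P(|Γ| ≥ h) = (1-p)^{h-1} ∏_{i=1}^{h-1}(1 - i/N). Then ∑_{h=1}^{N-1} P(|Γ| = h) · (q/(q + hw)) · (N - h)/(N - 1) = ∑_{h=1}^{N-1} (q/(q + Nw)) · (Nw/(q + Nw))^{h-1} · ∏_{i=2}^{h}(1 - i/N). -/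
/-!
Each summand matches on its own. Writing `ρ = N w / (q + N w)` and `Q k = ∏_{i ≤ k} (1 - i/N)`,
the tail is `P (k+1) = ρ^k Q k`, and the one-step drop `P (k+1) - P (k+2)` factors as
`ρ^k Q k · (q + (k+1) w)/(q + N w)` because `1 - ρ (1 - h/N) = (q + h w)/(q + N w)`.
The factor `q + h w` cancels against the killing probability, and
`Q k · (N - h)/(N - 1) = ∏_{2 ≤ i ≤ h} (1 - i/N)` since `(1 - h/N)/(1 - 1/N) = (N - h)/(N - 1)`.
-/

open Finset

theorem Finset.prod_Icc_one_mul_eq_mul_prod_Icc_two {M : Type*} [CommMonoid M] (f : ℕ → M)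
    (k : ℕ) : (∏ i ∈ Icc 1 k, f i) * f (k + 1) = f 1 * ∏ i ∈ Icc 2 (k + 1), f i := by
  rw [← prod_Icc_succ_top (by omega), ← mul_prod_Ioc_eq_prod_Icc (by omega),
    ← Icc_add_one_left_eq_Ioc]
  rfl

lemma prod_one_sub_div_mul_div_sub_one {n : ℝ} (hn : n ≠ 0) (hn1 : n - 1 ≠ 0) (k : ℕ) :
    (∏ i ∈ Icc 1 k, (1 - (i : ℝ) / n)) * ((n - (k + 1 : ℕ)) / (n - 1)) =
      ∏ i ∈ Icc 2 (k + 1), (1 - (i : ℝ) / n) := by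
  have h1n : 1 - 1 / n ≠ 0 := by
    rw [one_sub_div hn]
    exact div_ne_zero hn1 hn
  have key := prod_Icc_one_mul_eq_mul_prod_Icc_two (fun i : ℕ => 1 - (i : ℝ) / n) k
  rw [Nat.cast_one] at key
  rw [← mul_right_inj' h1n, ← key]
  field_simp

lemma one_sub_mul_one_sub_div {q w n : ℝ} (h : ℝ) (hn : n ≠ 0) (hqn : q + n * w ≠ 0) :
    1 - (1 - q / (q + n * w)) * (1 - h / n) = (q + h * w) / (q + n * w) := by
  field_simp
  ring

/-- The tail `P(|Γ| ≥ h)` of the length of the killed loop-erased walk on `K_N`. -/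
noncomputable def lerwTail (q w : ℝ) (N h : ℕ) : ℝ :=
  (1 - q / (q + (N : ℝ) * w)) ^ (h - 1) * ∏ i ∈ Icc 1 (h - 1), (1 - (i : ℝ) / (N : ℝ))

lemma lerwTail_sub_lerwTail_succ {q w : ℝ} {N : ℕ} (hN : (N : ℝ) ≠ 0)
    (hqN : q + N * w ≠ 0) (k : ℕ) :
    lerwTail q w N (k + 1) - lerwTail q w N (k + 2) =
      (q + (k + 1 : ℕ) * w) / (q + N * w) * lerwTail q w N (k + 1) := by
  rw [lerwTail, lerwTail, show k + 2 - 1 = k + 1 from rfl, Nat.add_sub_cancel,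
    prod_Icc_succ_top (by omega), pow_succ, ← one_sub_mul_one_sub_div _ hN hqN]
  ring

lemma lerwTail_potential_term {q w : ℝ} {N : ℕ} (hq : 0 < q) (hw : 0 < w) (k : ℕ)
    (hkN : k + 2 ≤ N) :
    (lerwTail q w N (k + 1) - lerwTail q w N (k + 2)) * (q / (q + (k + 1 : ℕ) * w)) *
        ((N - (k + 1 : ℕ)) / (N - 1)) =
      q / (q + N * w) * (N * w / (q + N * w)) ^ k * ∏ i ∈ Icc 2 (k + 1), (1 - (i : ℝ) / N) := by
  have hN : (2 : ℝ) ≤ N := by exact_mod_cast (by omega : 2 ≤ N)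
  have hqN : q + N * w ≠ 0 := by positivity
  have hqh : q + (k + 1 : ℕ) * w ≠ 0 := by positivity
  have hρ : 1 - q / (q + N * w) = N * w / (q + N * w) := by
    field_simp
    ring
  rw [lerwTail_sub_lerwTail_succ (by positivity) hqN,
    ← prod_one_sub_div_mul_div_sub_one (by positivity) (by linarith), lerwTail,
    Nat.add_sub_cancel, hρ]
  field_simp

theorem stmt11_general (q w : ℝ) (N : ℕ) (hq : 0 < q) (hw : 0 < w)
    (P : ℕ → ℝ)
    (hP : ∀ h : ℕ, 1 ≤ h → h ≤ N →
      P h = (1 - q / (q + (N : ℝ) * w)) ^ (h - 1) *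
        ∏ i ∈ Finset.Icc 1 (h - 1), (1 - (i : ℝ) / (N : ℝ))) :
    ∑ h ∈ Finset.Icc 1 (N - 1),
      (P h - P (h + 1)) * (q / (q + (h : ℝ) * w)) * (((N : ℝ) - (h : ℝ)) / ((N : ℝ) - 1))
    = ∑ h ∈ Finset.Icc 1 (N - 1),
      (q / (q + (N : ℝ) * w)) * ((N : ℝ) * w / (q + (N : ℝ) * w)) ^ (h - 1) *
        ∏ i ∈ Finset.Icc 2 h, (1 - (i : ℝ) / (N : ℝ)) := by
  refine sum_congr rfl fun h hh => ?_
  obtain ⟨hh1, hhN⟩ := mem_Icc.1 hh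
  obtain ⟨k, rfl⟩ := Nat.exists_eq_add_of_le' hh1
  rw [hP (k + 1) (by omega) (by omega), hP (k + 1 + 1) (by omega) (by omega)]
  exact lerwTail_potential_term hq hw k (by omega)

/-- The two-point potential summation identity on the complete graph:
given the survival function of the killed LERW length, the potential sum
reduces to a geometric-weighted product sum. -/
theorem stmt11 (q w : ℝ) (N : ℕ) (hq : 0 < q) (hw : 0 < w) (hN : 2 ≤ N)
    (P : ℕ → ℝ)
    (hP : ∀ h : ℕ, 1 ≤ h → h ≤ N →
      P h = (1 - q / (q + (N : ℝ) * w)) ^ (h - 1) *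
        ∏ i ∈ Finset.Icc 1 (h - 1), (1 - (i : ℝ) / (N : ℝ))) :
    ∑ h ∈ Finset.Icc 1 (N - 1),
      (P h - P (h + 1)) * (q / (q + (h : ℝ) * w)) * (((N : ℝ) - (h : ℝ)) / ((N : ℝ) - 1))
    = ∑ h ∈ Finset.Icc 1 (N - 1),
      (q / (q + (N : ℝ) * w)) * ((N : ℝ) * w / (q + (N : ℝ) * w)) ^ (h - 1) *
        ∏ i ∈ Finset.Icc 2 h, (1 - (i : ℝ) / (N : ℝ)) :=
  stmt11_general q w N hq hw P hP
end
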